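/- arXiv:2008.08632 — 2 statements merged into one kernel-verified Lean document; each statement's English description precedes it below -/
import Mathlib

section
/- Let n ≥ 1 and let z₁,…,zₙ be real numbers, all ≠ 1, with at least one zᵢ equal to −1, and let P(z) = ∏_{i=1}^n (z − zᵢ)/(1 − zᵢ) (so P(1) = 1). Set aᵢ = 1 + 2zᵢ/(zᵢ−1)², let σₖ be the k-th elementary symmetric polynomial of a₁,…,aₙ (σ₀ = 1), and ρₖ = σₖ / C(n,k). If Σ_{j=n−2k}^{n} C(2k, n−j)(−1)^{n−j} ρⱼ ≥ 0 for every k with 0 ≤ k ≤ ⌊n/2⌋, then |P(z)|² + |P(−z)|² ≤ 1 for every complex z with |z| = 1. -/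
/-!
On the unit circle `w = x + iy`, each factor satisfies `|(w - z)/(1 - z)|² = a (1 - x) + x`, so
`|P(w)|² = g(x)` and `|P(-w)|² = g(-x)` with `g(x) = ∏ (aᵢ (1 - x) + x)`. Expanding the
product, `g` is a polynomial in Bernstein form with coefficients `βₘ = ρₙ₋ₘ`, so its monomial
coefficients are `C(n, s) Δˢβ₀`. The hypothesis says exactly that the even-order differences
`Δ²ᵏβ₀` are nonnegative, hence the even part `g(x) + g(-x)` is largest at `x = ±1`, where it
equals `1 + ∏ (2aᵢ - 1) = 1` because the root `-1` contributes `a = 1/2`.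
-/

open Finset fwdDiff

theorem Complex.norm_sub_ofReal_div_sq {w : ℂ} (hw : ‖w‖ = 1) {z : ℝ} (hz : z ≠ 1) :
    ‖(w - z) / (1 - z)‖ ^ 2 = (1 + 2 * z / (z - 1) ^ 2) * (1 - w.re) + w.re := by
  have hz' : z - 1 ≠ 0 := sub_ne_zero.mpr hz
  have hre_im : w.re * w.re + w.im * w.im = 1 := by
    rw [← Complex.normSq_apply, Complex.normSq_eq_norm_sq, hw, one_pow]
  rw [norm_div, div_pow, ← Complex.normSq_eq_norm_sq, ← Complex.normSq_eq_norm_sq,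
    Complex.normSq_apply, Complex.normSq_apply]
  simp only [Complex.sub_re, Complex.ofReal_re, Complex.sub_im, Complex.ofReal_im, sub_zero,
    Complex.one_re, Complex.one_im, sub_self, mul_zero, add_zero]
  field_simp
  linear_combination (z - 1) ^ 2 * hre_im

theorem prod_mul_add_eq_sum_powersetCard {ι R : Type*} [CommSemiring R] [DecidableEq ι]
    (s : Finset ι) (a : ι → R) (u v : R) :
    ∏ i ∈ s, (a i * u + v) =
      ∑ k ∈ range (#s + 1), (∑ S ∈ powersetCard k s, ∏ i ∈ S, a i) * u ^ k * v ^ (#s - k) := by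
  rw [prod_add, ← sum_fiberwise_of_maps_to (g := card) (t := range (#s + 1))
    fun S hS => mem_range_succ_iff.mpr (card_le_card (mem_powerset.mp hS))]
  refine sum_congr rfl fun k _ => ?_
  rw [← powersetCard_eq_filter, sum_mul, sum_mul]
  refine sum_congr rfl fun S hS => ?_
  obtain ⟨hSs, rfl⟩ := mem_powersetCard.mp hS
  rw [prod_mul_distrib, prod_const, prod_const, card_sdiff_of_subset hSs]

theorem sum_choose_mul_pow_mul_one_sub_pow {R : Type*} [CommRing R] (n : ℕ) (β : ℕ → R) (x : R) :
    ∑ m ∈ range (n + 1), n.choose m * β m * x ^ m * (1 - x) ^ (n - m) =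
      ∑ s ∈ range (n + 1), n.choose s * Δ_[1] ^[s] β 0 * x ^ s := by
  let F : ℕ → ℕ → R := fun m t ↦
    n.choose (m + t) * (m + t).choose m * (-1) ^ t * β m * x ^ (m + t)
  calc ∑ m ∈ range (n + 1), n.choose m * β m * x ^ m * (1 - x) ^ (n - m)
      = ∑ m ∈ range (n + 1), ∑ t ∈ range (n + 1 - m), F m t := by
        refine sum_congr rfl fun m hm => ?_
        rw [sub_eq_neg_add, add_pow, Nat.sub_add_comm (mem_range_succ_iff.mp hm), mul_sum]
        refine sum_congr rfl fun t _ => ?_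
        have hchoose := Nat.choose_mul (n := n) (Nat.le_add_right m t)
        rw [Nat.add_sub_cancel_left] at hchoose
        simp only [F, one_pow, mul_one, neg_pow x t, pow_add x m t]
        rw [← Nat.cast_mul, hchoose]
        push_cast
        ring
    _ = ∑ s ∈ range (n + 1), ∑ m ∈ range (s + 1), F m (s - m) := (sum_range_diag_flip _ F).symm
    _ = ∑ s ∈ range (n + 1), n.choose s * Δ_[1] ^[s] β 0 * x ^ s := by
        simp only [fwdDiff_iter_eq_sum_shift, zero_add, smul_eq_mul, mul_one, zsmul_eq_mul,
          mul_sum, sum_mul]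
        refine sum_congr rfl fun s _ => sum_congr rfl fun m hm => ?_
        simp only [F, Nat.add_sub_cancel' (mem_range_succ_iff.mp hm)]
        push_cast
        ring

theorem prod_mul_one_sub_add_eq_sum_fwdDiff {ι K : Type*} [Fintype ι] [DecidableEq ι] [Field K]
    [CharZero K] (a : ι → K) (y : K) :
    ∏ i, (a i * (1 - y) + y) =
      ∑ s ∈ range (Fintype.card ι + 1), (Fintype.card ι).choose s *
        Δ_[1] ^[s] (fun m ↦ (∑ S ∈ powersetCard (Fintype.card ι - m) univ, ∏ i ∈ S, a i) /
          (Fintype.card ι).choose (Fintype.card ι - m)) 0 * y ^ s := by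
  rw [prod_mul_add_eq_sum_powersetCard, card_univ, ← sum_choose_mul_pow_mul_one_sub_pow,
    ← sum_range_reflect]
  refine sum_congr rfl fun m hm ↦ ?_
  have hm : m ≤ Fintype.card ι := mem_range_succ_iff.mp hm
  have hchoose : ((Fintype.card ι).choose m : K) ≠ 0 :=
    Nat.cast_ne_zero.mpr (Nat.choose_pos hm).ne'
  rw [add_tsub_cancel_right, Nat.sub_sub_self hm, Nat.choose_symm hm]
  field_simp

theorem fwdDiff_iter_two_mul_comp_sub {R : Type*} [CommRing R] (ρ : ℕ → R) {n k : ℕ}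
    (hk : 2 * k ≤ n) :
    Δ_[1] ^[2 * k] (fun m ↦ ρ (n - m)) 0 =
      ∑ j ∈ Icc (n - 2 * k) n, ((2 * k).choose (n - j) : R) * (-1) ^ (n - j) * ρ j := by
  have hIcc : Icc (n - 2 * k) n = Ico (n + 1 - (2 * k + 1)) (n + 1 - 0) := by
    rw [← Ico_add_one_right_eq_Icc]; congr 1; omega
  rw [fwdDiff_iter_eq_sum_shift, hIcc, ← sum_Ico_reflect _ _ (by omega), range_eq_Ico]
  refine sum_congr rfl fun m hm => ?_
  have hm : m ≤ 2 * k := by have := (mem_Ico.mp hm).2; omega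
  rw [Nat.sub_sub_self (hm.trans hk), zero_add, smul_eq_mul, mul_one, zsmul_eq_mul,
    neg_one_pow_congr (R := ℤ) (m := 2 * k - m) (n := m) (by simp only [Nat.even_iff]; omega)]
  push_cast
  ring

theorem sum_mul_pow_add_neg_pow_le {s : Finset ℕ} {c : ℕ → ℝ} (hc : ∀ k ∈ s, Even k → 0 ≤ c k)
    {x : ℝ} (hx : |x| ≤ 1) :
    ∑ k ∈ s, c k * (x ^ k + (-x) ^ k) ≤ ∑ k ∈ s, c k * (1 + (-1) ^ k) := by
  refine sum_le_sum fun k hk => ?_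
  rcases Nat.even_or_odd k with heven | hodd
  · rw [heven.neg_pow, heven.neg_one_pow, ← two_mul, ← two_mul]
    have hxk : x ^ k ≤ 1 := by
      rw [← heven.pow_abs]
      exact pow_le_one₀ (abs_nonneg x) hx
    have := hc k hk heven
    nlinarith
  · simp [hodd.neg_pow]

theorem stmt_1_general (n : ℕ) (z : Fin n → ℝ)
    (hz : ∀ i, z i ≠ 1) (hroot : ∃ i, z i = -1)
    (P : ℂ → ℂ) (hP : ∀ w : ℂ, P w = ∏ i, (w - (z i : ℂ)) / (1 - (z i : ℂ)))
    (a : Fin n → ℝ) (ha : ∀ i, a i = 1 + 2 * z i / (z i - 1) ^ 2)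
    (σ : ℕ → ℝ)
    (hσ : ∀ k, σ k = ∑ S ∈ Finset.powersetCard k (Finset.univ : Finset (Fin n)),
      ∏ i ∈ S, a i)
    (ρ : ℕ → ℝ) (hρ : ∀ k, ρ k = σ k / (n.choose k : ℝ))
    (hΔ : ∀ k ≤ n / 2,
      0 ≤ ∑ j ∈ Finset.Icc (n - 2 * k) n,
        ((2 * k).choose (n - j) : ℝ) * (-1 : ℝ) ^ (n - j) * ρ j) :
    ∀ w : ℂ, ‖w‖ = 1 →
      ‖P w‖ ^ 2 + ‖P (-w)‖ ^ 2 ≤ 1 := by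
  intro w hw
  obtain ⟨i₀, hi₀⟩ := hroot
  set c : ℕ → ℝ := fun s ↦ n.choose s * Δ_[1] ^[s] (fun m ↦ ρ (n - m)) 0
  have hnorm : ∀ v : ℂ, ‖v‖ = 1 → ‖P v‖ ^ 2 = ∏ i, (a i * (1 - v.re) + v.re) := by
    intro v hv
    rw [hP, norm_prod, ← prod_pow]
    exact prod_congr rfl fun i _ ↦ by rw [Complex.norm_sub_ofReal_div_sq hv (hz i), ha]
  have hpoly : ∀ y : ℝ, ∏ i, (a i * (1 - y) + y) = ∑ s ∈ range (n + 1), c s * y ^ s := by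
    intro y
    rw [prod_mul_one_sub_add_eq_sum_fwdDiff, Fintype.card_fin]
    simp only [c, hρ, hσ]
  have hc : ∀ s ∈ range (n + 1), Even s → 0 ≤ c s := by
    rintro s hs ⟨k, rfl⟩
    have hk : 2 * k ≤ n := by have := mem_range_succ_iff.mp hs; omega
    simp only [c, ← two_mul, fwdDiff_iter_two_mul_comp_sub ρ hk]
    exact mul_nonneg (Nat.cast_nonneg _) (hΔ k (by omega))
  calc ‖P w‖ ^ 2 + ‖P (-w)‖ ^ 2 = ∑ s ∈ range (n + 1), c s * (w.re ^ s + (-w.re) ^ s) := by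
        rw [hnorm w hw, hnorm (-w) (by rwa [norm_neg]), Complex.neg_re, hpoly, hpoly,
          ← sum_add_distrib]
        simp only [mul_add]
    _ ≤ ∑ s ∈ range (n + 1), c s * (1 + (-1) ^ s) :=
        sum_mul_pow_add_neg_pow_le hc ((Complex.abs_re_le_norm w).trans hw.le)
    _ = ∏ i, (a i * (1 - 1) + 1) + ∏ i, (a i * (1 - -1) + -1) := by
        rw [hpoly, hpoly, ← sum_add_distrib]
        simp only [one_pow, mul_add]
    _ = 1 := by
        have hvanish : ∏ i, (a i * (1 - -1) + -1) = 0 :=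
          prod_eq_zero (mem_univ i₀) (by rw [ha, hi₀]; norm_num)
        rw [hvanish, sub_self]
        simp

theorem stmt_1 (n : ℕ) (hn : 1 ≤ n) (z : Fin n → ℝ)
    (hz : ∀ i, z i ≠ 1) (hroot : ∃ i, z i = -1)
    (P : ℂ → ℂ) (hP : ∀ w : ℂ, P w = ∏ i, (w - (z i : ℂ)) / (1 - (z i : ℂ)))
    (a : Fin n → ℝ) (ha : ∀ i, a i = 1 + 2 * z i / (z i - 1) ^ 2)
    (σ : ℕ → ℝ)
    (hσ : ∀ k, σ k = ∑ S ∈ Finset.powersetCard k (Finset.univ : Finset (Fin n)),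
      ∏ i ∈ S, a i)
    (ρ : ℕ → ℝ) (hρ : ∀ k, ρ k = σ k / (n.choose k : ℝ))
    (hΔ : ∀ k ≤ n / 2,
      0 ≤ ∑ j ∈ Finset.Icc (n - 2 * k) n,
        ((2 * k).choose (n - j) : ℝ) * (-1 : ℝ) ^ (n - j) * ρ j) :
    ∀ w : ℂ, ‖w‖ = 1 →
      ‖P w‖ ^ 2 + ‖P (-w)‖ ^ 2 ≤ 1 :=
  stmt_1_general n z hz hroot P hP a ha σ hσ ρ hρ hΔ
end

section
/- Let n ≥ 1 and let z₁,…,zₙ be real numbers, all ≠ 1. Set aᵢ = 1 + 2zᵢ/(zᵢ−1)², let σₖ be the k-th elementary symmetric polynomial of a₁,…,aₙ (σ₀ = 1), and ρₖ = σₖ / C(n,k). For 0 ≤ l ≤ ⌊n/2⌋ define d_l = 4 · Σ_{k=l}^{⌊n/2⌋} 2^{−2k} · (n! / ((n−2k)! (k−l)! (k+l)!)) · Σ_{m=0}^{2k} (−1)^m C(2k, m) ρ_{n−m}. Then for every real φ, T(φ) = d₀/2 + Σ_{l=1}^{⌊n/2⌋} d_l · cos(2lφ). In particular, if Σ_{m=0}^{2k}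 (−1)^m C(2k, m) ρ_{n−m} ≥ 0 for every 0 ≤ k ≤ ⌊n/2⌋, then every coefficient d_l is nonnegative. -/
/-!
On the unit circle, `ψ_{x}(w) = a - (a - 1) Re w` with `a = 1 + 2x/(x - 1)²`, so
`T(φ) = P(-cos φ) + P(cos φ)` for `P(t) = ∏ᵢ (aᵢ (1 + t) - t) = ∑ⱼ σⱼ (1 + t)ʲ (-t)ⁿ⁻ʲ`.
Expanding in powers of `t`, only the even powers survive, and the coefficient of `t^{2k}` is
`C(n, 2k) ∑ₘ (-1)ᵐ C(2k, m) ρ_{n-m}`. Linearising `cos^{2k} φ` into `cos (2lφ)` by the binomial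
theorem for `(e^{iφ} + e^{-iφ})^{2k}` gives the Fourier coefficients `d_l`, and they are
nonnegative whenever those coefficients are.
-/

/-- `ψ_{z₀}(z) = |z - z₀|² / |1 - z₀|²`. -/
noncomputable def psi (z₀ z : ℂ) : ℝ :=
  ‖z - z₀‖ ^ 2 / ‖1 - z₀‖ ^ 2

/-- `T(φ) = ∏ᵢ ψ_{zᵢ}(e^{iφ}) + ∏ᵢ ψ_{zᵢ}(-e^{iφ})` for real roots `zᵢ`. -/
noncomputable def T {n : ℕ} (z : Fin n → ℝ) (φ : ℝ) : ℝ :=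
  (∏ i, psi (z i) (Complex.exp (φ * Complex.I))) +
    (∏ i, psi (z i) (-Complex.exp (φ * Complex.I)))

open Finset Real

lemma psi_ofReal_of_norm_eq_one {x : ℝ} (hx : x ≠ 1) {w : ℂ} (hw : ‖w‖ = 1) :
    psi x w = 1 + 2 * x / (x - 1) ^ 2 - 2 * x / (x - 1) ^ 2 * w.re := by
  have hx' : x - 1 ≠ 0 := sub_ne_zero.2 hx
  have hw' : w.re * w.re + w.im * w.im = 1 := by
    rw [← Complex.normSq_apply, ← Complex.sq_norm, hw, one_pow]
  rw [psi, Complex.sq_norm, Complex.sq_norm, Complex.normSq_apply, Complex.normSq_apply]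
  simp only [Complex.sub_re, Complex.sub_im, Complex.ofReal_re, Complex.ofReal_im,
    Complex.one_re, Complex.one_im]
  field_simp
  linear_combination (x - 1) ^ 2 * hw'

lemma T_eq_prod_add_prod {n : ℕ} {z a : Fin n → ℝ} (hz : ∀ i, z i ≠ 1)
    (ha : ∀ i, a i = 1 + 2 * z i / (z i - 1) ^ 2) (φ : ℝ) :
    T z φ = ∏ i, (a i * (1 + -cos φ) - -cos φ) + ∏ i, (a i * (1 + cos φ) - cos φ) := by
  have hexp : ‖Complex.exp (φ * Complex.I)‖ = 1 := Complex.norm_exp_ofReal_mul_I φ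
  unfold T
  congr 1 <;> refine prod_congr rfl fun i _ => ?_
  · rw [psi_ofReal_of_norm_eq_one (hz i) hexp, Complex.exp_ofReal_mul_I_re, ha i]
    ring
  · rw [psi_ofReal_of_norm_eq_one (hz i) (by rwa [norm_neg]), Complex.neg_re,
      Complex.exp_ofReal_mul_I_re, ha i]
    ring

lemma prod_mul_add_eq_sum {ι R : Type*} [Fintype ι] [CommSemiring R] (a : ι → R) (x y : R) :
    ∏ i, (a i * x + y) = ∑ j ∈ range (Fintype.card ι + 1),
      (∑ S ∈ powersetCard j univ, ∏ i ∈ S, a i) * x ^ j * y ^ (Fintype.card ι - j) := by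
  classical
  rw [Fintype.prod_add, ← sum_fiberwise_of_maps_to (g := card) (t := range (Fintype.card ι + 1))
    (fun S _ => mem_range_succ_iff.2 (card_le_univ S))]
  refine sum_congr rfl fun j _ => ?_
  rw [powersetCard_eq_filter, sum_mul, sum_mul]
  refine sum_congr rfl fun S hS => ?_
  rw [(mem_filter.1 hS).2.symm]
  simp only [prod_mul_distrib, prod_const, card_compl]

lemma sum_mul_one_add_pow_mul_neg_pow {R : Type*} [CommRing R] (n : ℕ) (σ : ℕ → R) (t : R) :
    ∑ j ∈ range (n + 1), σ j * (1 + t) ^ j * (-t) ^ (n - j) =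
      ∑ K ∈ range (n + 1), t ^ K *
        ∑ m ∈ range (K + 1), (-1) ^ m * ((n - m).choose (K - m) : R) * σ (n - m) := by
  set f : ℕ → ℕ → R := fun m i => t ^ (m + i) * ((-1) ^ m * ((n - m).choose i : R) * σ (n - m))
  calc ∑ j ∈ range (n + 1), σ j * (1 + t) ^ j * (-t) ^ (n - j)
      = ∑ m ∈ range (n + 1), σ (n - m) * (t + 1) ^ (n - m) * (-t) ^ m := by
        rw [← sum_range_reflect]
        refine sum_congr rfl fun m hm => ?_
        rw [add_comm 1 t, Nat.add_sub_cancel, Nat.sub_sub_self (mem_range_succ_iff.1 hm)]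
    _ = ∑ m ∈ range (n + 1), ∑ i ∈ range (n + 1 - m), f m i := by
        refine sum_congr rfl fun m hm => ?_
        rw [add_pow, Nat.sub_add_comm (mem_range_succ_iff.1 hm), mul_sum, sum_mul]
        refine sum_congr rfl fun i _ => ?_
        simp only [f, one_pow, mul_one]
        rw [neg_pow, pow_add]
        ring
    _ = _ := by
        rw [← sum_range_diag_flip]
        refine sum_congr rfl fun K _ => ?_
        rw [mul_sum]
        refine sum_congr rfl fun m hm => ?_
        simp only [f, Nat.add_sub_cancel' (mem_range_succ_iff.1 hm)]

lemma prod_mul_one_add_sub_eq_sum {ι R : Type*} [Fintype ι] [CommRing R] {a : ι → R}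
    {σ : ℕ → R} (hσ : ∀ k, σ k = ∑ S ∈ powersetCard k univ, ∏ i ∈ S, a i) (t : R) :
    ∏ i, (a i * (1 + t) - t) = ∑ K ∈ range (Fintype.card ι + 1), t ^ K *
      ∑ m ∈ range (K + 1),
        (-1) ^ m * ((Fintype.card ι - m).choose (K - m) : R) * σ (Fintype.card ι - m) := by
  simp_rw [sub_eq_add_neg _ t, prod_mul_add_eq_sum, ← hσ]
  exact sum_mul_one_add_pow_mul_neg_pow _ σ t

lemma sum_range_neg_pow_add_pow_mul {R : Type*} [CommRing R] (N : ℕ) (t : R) (f : ℕ → R) :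
    ∑ K ∈ range (N + 1), ((-t) ^ K + t ^ K) * f K =
      2 * ∑ k ∈ range (N / 2 + 1), t ^ (2 * k) * f (2 * k) := by
  have hodd : ∀ K ∈ range (N + 1), K ∉ (range (N / 2 + 1)).image (2 * ·) →
      ((-t) ^ K + t ^ K) * f K = 0 := by
    intro K hK hK'
    have : Odd K := by
      rw [← Nat.not_even_iff_odd]
      rintro ⟨j, rfl⟩
      exact hK' (mem_image.2 ⟨j, by simp only [mem_range] at hK ⊢; omega, by ring⟩)
    rw [this.neg_pow]
    ring
  rw [← sum_subset _ hodd, sum_image, mul_sum]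
  · refine sum_congr rfl fun k _ => ?_
    rw [(even_two_mul k).neg_pow]
    ring
  · intro i _ j _ h
    simpa using h
  · intro K
    simp only [mem_image, mem_range]
    omega

lemma choose_sub_mul_choose_sub {n K m : ℕ} (hK : K ≤ n) (hm : m ≤ K) :
    (n - m).choose (K - m) * n.choose (n - m) = n.choose K * K.choose m := by
  rw [Nat.choose_symm (hm.trans hK), Nat.choose_mul hm, mul_comm]

lemma sum_neg_one_pow_choose_mul_eq {𝕜 : Type*} [Field 𝕜] [CharZero 𝕜] {n K : ℕ}
    {σ ρ : ℕ → 𝕜} (hρ : ∀ k, ρ k = σ k / n.choose k) (hK : K ≤ n) :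
    ∑ m ∈ range (K + 1), (-1) ^ m * ((n - m).choose (K - m) : 𝕜) * σ (n - m) =
      n.choose K * ∑ m ∈ range (K + 1), (-1) ^ m * (K.choose m : 𝕜) * ρ (n - m) := by
  rw [mul_sum]
  refine sum_congr rfl fun m hm => ?_
  have hmK : m ≤ K := mem_range_succ_iff.1 hm
  have hchoose : (n.choose (n - m) : 𝕜) ≠ 0 :=
    Nat.cast_ne_zero.2 (Nat.choose_pos (Nat.sub_le n m)).ne'
  have hcast := congrArg (Nat.cast (R := 𝕜)) (choose_sub_mul_choose_sub hK hmK)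
  push_cast at hcast
  rw [hρ, mul_div_assoc', mul_div_assoc', eq_div_iff hchoose]
  linear_combination (-1) ^ m * σ (n - m) * hcast

lemma cast_factorial_div_eq_choose_mul_choose {𝕜 : Type*} [Field 𝕜] [CharZero 𝕜] {n k l : ℕ}
    (hl : l ≤ k) (hk : 2 * k ≤ n) :
    (n.factorial : 𝕜) / ((n - 2 * k).factorial * (k - l).factorial * (k + l).factorial) =
      n.choose (2 * k) * (2 * k).choose (k - l) := by
  rw [Nat.cast_choose 𝕜 hk, Nat.cast_choose 𝕜 (by omega : k - l ≤ 2 * k),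
    show 2 * k - (k - l) = k + l by omega]
  have h2k : ((2 * k).factorial : 𝕜) ≠ 0 := Nat.cast_ne_zero.2 (Nat.factorial_ne_zero _)
  field_simp

lemma two_mul_cos_pow (n : ℕ) (φ : ℝ) :
    (2 * cos φ) ^ n = ∑ j ∈ range (n + 1), (n.choose j : ℝ) * cos ((2 * j - n) * φ) := by
  have h := congrArg (fun w : ℂ => (w ^ n).re) (Complex.two_cos (φ : ℂ))
  rw [← Complex.ofReal_cos, ← Complex.ofReal_ofNat, ← Complex.ofReal_mul, ← Complex.ofReal_pow,
    Complex.ofReal_re] at h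
  rw [h, add_pow, Complex.re_sum]
  refine sum_congr rfl fun j hj => ?_
  have hexp : (j : ℂ) * (φ * Complex.I) + ((n - j : ℕ) : ℂ) * (-φ * Complex.I) =
      (((2 * j - n) * φ : ℝ) : ℂ) * Complex.I := by
    push_cast [mem_range_succ_iff.1 hj]
    ring
  rw [← Complex.exp_nat_mul, ← Complex.exp_nat_mul, ← Complex.exp_add, hexp, mul_comm,
    ← Complex.ofReal_natCast (n.choose j), Complex.re_ofReal_mul, Complex.exp_ofReal_mul_I_re]

lemma sum_range_two_mul_add_one {M : Type*} [AddCommMonoid M] (k : ℕ) (g : ℕ → M) :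
    ∑ j ∈ range (2 * k + 1), g j = g k + ∑ l ∈ Icc 1 k, (g (k - l) + g (k + l)) := by
  have hlow : ∑ l ∈ Icc 1 k, g (k - l) = ∑ j ∈ Ico 0 k, g j := by
    rw [← Ico_add_one_right_eq_Icc, sum_Ico_reflect _ _ le_rfl]
    simp
  have hhigh : ∑ l ∈ Icc 1 k, g (k + l) = ∑ j ∈ Ico (k + 1) (2 * k + 1), g j := by
    rw [← Ico_add_one_right_eq_Icc]
    simp_rw [add_comm k, sum_Ico_add']
    rw [add_comm 1 k, add_right_comm, ← two_mul]
  rw [sum_add_distrib, hlow, hhigh, range_eq_Ico,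
    ← sum_Ico_consecutive _ (Nat.zero_le k) (by omega : k ≤ 2 * k + 1),
    sum_eq_sum_Ico_succ_bot (by omega : k < 2 * k + 1)]
  abel

lemma cos_pow_two_mul (k : ℕ) (φ : ℝ) :
    cos φ ^ (2 * k) = (2 ^ (2 * k))⁻¹ *
      ((2 * k).choose k + 2 * ∑ l ∈ Icc 1 k, ((2 * k).choose (k - l) : ℝ) * cos (2 * l * φ)) := by
  have h := two_mul_cos_pow (2 * k) φ
  rw [sum_range_two_mul_add_one, mul_pow] at h
  rw [eq_inv_mul_iff_mul_eq₀ (by positivity), h, mul_sum]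
  congr 1
  · push_cast
    simp
  · refine sum_congr rfl fun l hl => ?_
    have hlk : l ≤ k := (mem_Icc.1 hl).2
    rw [Nat.choose_symm_of_eq_add (by omega : 2 * k = k + l + (k - l)), ← cos_neg]
    push_cast [hlk]
    ring_nf

lemma sum_mul_cos_pow_two_mul (N : ℕ) (F D : ℕ → ℝ)
    (hD : ∀ l, D l = 2 * ∑ k ∈ Icc l N, (2 ^ (2 * k))⁻¹ * (2 * k).choose (k - l) * F k)
    (φ : ℝ) :
    ∑ k ∈ range (N + 1), F k * cos φ ^ (2 * k) =
      D 0 / 2 + ∑ l ∈ Icc 1 N, D l * cos (2 * l * φ) := by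
  have hswap : ∀ k l, k ∈ range (N + 1) ∧ l ∈ Icc 1 k ↔ k ∈ Icc l N ∧ l ∈ Icc 1 N := by
    intro k l
    simp only [mem_range, mem_Icc]
    omega
  simp_rw [cos_pow_two_mul, mul_add, mul_sum, sum_add_distrib]
  congr 1
  · rw [hD, range_eq_Ico, Ico_add_one_right_eq_Icc, mul_sum, sum_div]
    refine sum_congr rfl fun k _ => ?_
    rw [Nat.sub_zero]
    ring
  · rw [sum_comm' hswap]
    refine sum_congr rfl fun l _ => ?_
    rw [hD, mul_sum, sum_mul]
    refine sum_congr rfl fun k _ => ?_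
    ring

theorem stmt_11_general (n : ℕ) (z : Fin n → ℝ) (hz : ∀ i, z i ≠ 1)
    (a : Fin n → ℝ) (ha : ∀ i, a i = 1 + 2 * z i / (z i - 1) ^ 2)
    (σ : ℕ → ℝ)
    (hσ : ∀ k, σ k = ∑ S ∈ Finset.powersetCard k (Finset.univ : Finset (Fin n)),
      ∏ i ∈ S, a i)
    (ρ : ℕ → ℝ) (hρ : ∀ k, ρ k = σ k / (n.choose k : ℝ))
    (d : ℕ → ℝ)
    (hd : ∀ l, d l = 4 * ∑ k ∈ Finset.Icc l (n / 2),
      ((2 : ℝ) ^ (2 * k))⁻¹ *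
        ((n.factorial : ℝ) /
          ((n - 2 * k).factorial * (k - l).factorial * (k + l).factorial)) *
        ∑ m ∈ Finset.range (2 * k + 1),
          (-1 : ℝ) ^ m * ((2 * k).choose m : ℝ) * ρ (n - m)) :
    (∀ φ : ℝ, T z φ = d 0 / 2 +
        ∑ l ∈ Finset.Icc 1 (n / 2), d l * Real.cos (2 * l * φ)) ∧
      ((∀ k ≤ n / 2,
          0 ≤ ∑ m ∈ Finset.range (2 * k + 1),
            (-1 : ℝ) ^ m * ((2 * k).choose m : ℝ) * ρ (n - m)) →
        ∀ l ≤ n / 2, 0 ≤ d l) := by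
  have hd' : ∀ l, d l = 2 * ∑ k ∈ Icc l (n / 2), (2 ^ (2 * k))⁻¹ * (2 * k).choose (k - l) *
      (2 * (n.choose (2 * k) *
        ∑ m ∈ range (2 * k + 1), (-1) ^ m * ((2 * k).choose m : ℝ) * ρ (n - m))) := by
    intro l
    rw [hd, mul_sum, mul_sum]
    refine sum_congr rfl fun k hk => ?_
    obtain ⟨hlk, hkn⟩ := mem_Icc.1 hk
    rw [cast_factorial_div_eq_choose_mul_choose hlk (by omega)]
    ring
  refine ⟨fun φ => ?_, fun hpos l _ => ?_⟩
  · rw [T_eq_prod_add_prod hz ha, prod_mul_one_add_sub_eq_sum hσ,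
      prod_mul_one_add_sub_eq_sum hσ, ← sum_add_distrib]
    simp_rw [Fintype.card_fin, ← add_mul]
    rw [sum_range_neg_pow_add_pow_mul, ← sum_mul_cos_pow_two_mul (n / 2) _ d hd' φ, mul_sum]
    refine sum_congr rfl fun k hk => ?_
    rw [sum_neg_one_pow_choose_mul_eq hρ (by have := mem_range_succ_iff.1 hk; omega)]
    ring
  · rw [hd]
    refine mul_nonneg (by norm_num) (sum_nonneg fun k hk => ?_)
    exact mul_nonneg (by positivity) (hpos k (mem_Icc.1 hk).2)

theorem stmt_11 (n : ℕ) (hn : 1 ≤ n) (z : Fin n → ℝ) (hz : ∀ i, z i ≠ 1)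
    (a : Fin n → ℝ) (ha : ∀ i, a i = 1 + 2 * z i / (z i - 1) ^ 2)
    (σ : ℕ → ℝ)
    (hσ : ∀ k, σ k = ∑ S ∈ Finset.powersetCard k (Finset.univ : Finset (Fin n)),
      ∏ i ∈ S, a i)
    (ρ : ℕ → ℝ) (hρ : ∀ k, ρ k = σ k / (n.choose k : ℝ))
    (d : ℕ → ℝ)
    (hd : ∀ l, d l = 4 * ∑ k ∈ Finset.Icc l (n / 2),
      ((2 : ℝ) ^ (2 * k))⁻¹ *
        ((n.factorial : ℝ) /
          ((n - 2 * k).factorial * (k - l).factorial * (k + l).factorial)) *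
        ∑ m ∈ Finset.range (2 * k + 1),
          (-1 : ℝ) ^ m * ((2 * k).choose m : ℝ) * ρ (n - m)) :
    (∀ φ : ℝ, T z φ = d 0 / 2 +
        ∑ l ∈ Finset.Icc 1 (n / 2), d l * Real.cos (2 * l * φ)) ∧
      ((∀ k ≤ n / 2,
          0 ≤ ∑ m ∈ Finset.range (2 * k + 1),
            (-1 : ℝ) ^ m * ((2 * k).choose m : ℝ) * ρ (n - m)) →
        ∀ l ≤ n / 2, 0 ≤ d l) :=
  stmt_11_general n z hz a ha σ hσ ρ hρ d hd
end
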